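/- The function H1(x,y,z) = y·z is a constant of motion of the Lotka–Volterra type system ẋ = x(by+cz), ẏ = y(ax−by+cz), ż = z(−ax+by−cz): for every differentiable curve γ : ℝ → ℝ³, γ = (x,y,z), satisfying x'(t) = x(t)(b·y(t)+c·z(t)), y'(t) = y(t)(a·x(t)−b·y(t)+c·z(t)), z'(t) = z(t)(−a·x(t)+b·y(t)−c·z(t)) for all t, the function t ↦ y(t)·z(t) is constant. -/

import Mathlib

theorem mul_eq_of_hasDerivAt_mul_of_hasDerivAt_mul_neg {y z f : ℝ → ℝ}
    (hy : ∀ t, HasDerivAt y (y t * f t) t) (hz : ∀ t, HasDerivAt z (z t * -f t) t) (s t : ℝ) :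
    y s * z s = y t * z t := by
  have hyz : ∀ u, HasDerivAt (fun t => y t * z t) 0 u := fun u =>
    ((hy u).mul (hz u)).congr_deriv (by ring)
  exact is_const_of_deriv_eq_zero (fun u => (hyz u).differentiableAt) (fun u => (hyz u).deriv) s t

theorem H1_constant_of_motion (a b c : ℝ)
    (x y z : ℝ → ℝ)
    (hy : ∀ t, HasDerivAt y (y t * (a * x t - b * y t + c * z t)) t)
    (hz : ∀ t, HasDerivAt z (z t * (-(a * x t) + b * y t - c * z t)) t) :
    ∀ s t : ℝ, y s * z s = y t * z t :=
  mul_eq_of_hasDerivAt_mul_of_hasDerivAt_mul_neg hy fun t => (hz t).congr_deriv (by ring)
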